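/- arXiv:1701.08726 — 2 statements merged into one kernel-verified Lean document; each statement's English description precedes it below -/
import Mathlib

section
/- Hun(Q^n) ≤ C(n, ⌊n/2⌋). -/
open Finset
open scoped Classical

variable {V : Type*} [Fintype V]

/-- Open neighborhood of a set of vertices. -/
noncomputable def nbhd (G : SimpleGraph V) (S : Finset V) : Finset V :=
  Finset.univ.filter fun w => ∃ v ∈ S, G.Adj v w

/-- Possible rabbit positions after playing the strategy `L`, starting from `S`. -/
noncomputable def rabbitFrom (G : SimpleGraph V) (S : Finset V) (L : List (Finset V)) : Finset V :=
  L.foldl (fun R H => nbhd G (R \ H)) S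

/-- A strategy wins if the set of possible rabbit positions is eventually empty. -/
def Wins (G : SimpleGraph V) (L : List (Finset V)) : Prop :=
  rabbitFrom G Finset.univ L = ∅

/-- The hunter number: minimum over winning strategies of the max number of simultaneous shots. -/
noncomputable def hunterNumber (G : SimpleGraph V) : ℕ :=
  sInf {k | ∃ L : List (Finset V), Wins G L ∧ ∀ s ∈ L, s.card ≤ k}

/-- The hypercube graph on subsets of `Fin n`: adjacent iff symmetric difference a singleton. -/
noncomputable def Q (n : ℕ) : SimpleGraph (Finset (Fin n)) where
  Adj x y := (symmDiff x y).card = 1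
  symm := by
    constructor
    intro x y h
    rwa [symmDiff_comm]
  loopless := by
    constructor
    intro x
    simp [symmDiff_self]

/-- Strict weightlex order: smaller weight, or equal weight and the minimum of the
symmetric difference belongs to the first set. -/
def wlexLt {n : ℕ} (x y : Finset (Fin n)) : Prop :=
  x.card < y.card ∨
    (x.card = y.card ∧ ∃ a ∈ x, a ∉ y ∧ ∀ b ∈ symmDiff x y, a ≤ b)

/-- `S` is an initial segment of weightlex order restricted to the class `P`. -/
def IsInitSeg {n : ℕ} (P : Finset (Fin n) → Prop) (S : Finset (Finset (Fin n))) : Prop :=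
  (∀ x ∈ S, P x) ∧ ∀ x y, y ∈ S → P x → wlexLt x y → x ∈ S

/-!
A graph homomorphism `f : G →g G'` whose fibres have at most `k` vertices transfers strategies:
shooting the preimage of every shot of a winning strategy on `G'` wins on `G`, because the image of
a rabbit's trajectory in `G` is a trajectory in `G'` dodging the original shots. The weight map
sends the cube `Q n` onto the path on the levels `0, …, n`, the fibre over level `k` having
`n.choose k ≤ n.choose (n / 2)` vertices, and a single hunter wins on a path by sweeping it once
in each direction.
-/

open SimpleGraph

variable {W : Type*}

lemma rabbitFrom_append (G : SimpleGraph V) (S : Finset V) (L₁ L₂ : List (Finset V)) :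
    rabbitFrom G S (L₁ ++ L₂) = rabbitFrom G (rabbitFrom G S L₁) L₂ :=
  List.foldl_append

lemma rabbitFrom_concat (G : SimpleGraph V) (S : Finset V) (L : List (Finset V)) (H : Finset V) :
    rabbitFrom G S (L ++ [H]) = nbhd G (rabbitFrom G S L \ H) :=
  List.foldl_concat ..

lemma exists_wins_card_le_hunterNumber (G : SimpleGraph V) :
    ∃ L, Wins G L ∧ ∀ s ∈ L, s.card ≤ hunterNumber G := by
  have hshoot : Wins G [univ] := by simp [Wins, rabbitFrom, nbhd]
  exact Nat.sInf_mem (s := {k | ∃ L : List (Finset V), Wins G L ∧ ∀ s ∈ L, s.card ≤ k})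
    ⟨Fintype.card V, [univ], hshoot, by simp [card_le_univ]⟩

/-- A shot `H` in the target of `f` is simulated in its source by shooting every vertex over `H`. -/
noncomputable def pullback (f : V → W) (H : Finset W) : Finset V :=
  univ.filter fun v => f v ∈ H

@[simp]
lemma mem_pullback {f : V → W} {H : Finset W} {v : V} : v ∈ pullback f H ↔ f v ∈ H := by
  simp [pullback]

@[simp]
lemma pullback_empty (f : V → W) : pullback f ∅ = ∅ := by
  ext; simp

lemma card_pullback_le [DecidableEq W] (f : V → W) {k : ℕ}
    (hk : ∀ w, (univ.filter fun v => f v = w).card ≤ k) (H : Finset W) :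
    (pullback f H).card ≤ k * H.card :=
  card_le_mul_card_image_of_maps_to (fun _ hv => mem_pullback.mp hv) k
    fun w _ => (card_le_card (monotone_filter_left _ (subset_univ _))).trans (hk w)

section Homomorphism

variable [Fintype W] {G : SimpleGraph V} {G' : SimpleGraph W}

lemma nbhd_sdiff_pullback_subset (f : G →g G') {S : Finset V} {T : Finset W}
    (hST : S ⊆ pullback f T) (H : Finset W) :
    nbhd G (S \ pullback f H) ⊆ pullback f (nbhd G' (T \ H)) := by
  intro w hw
  simp only [nbhd, mem_pullback, mem_filter, mem_univ, true_and, mem_sdiff] at hw ⊢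
  obtain ⟨v, ⟨hvS, hvH⟩, hadj⟩ := hw
  exact ⟨f v, ⟨mem_pullback.mp (hST hvS), hvH⟩, f.map_adj hadj⟩

lemma rabbitFrom_map_pullback_subset (f : G →g G') {S : Finset V} {T : Finset W}
    (hST : S ⊆ pullback f T) (L : List (Finset W)) :
    rabbitFrom G S (L.map (pullback f)) ⊆ pullback f (rabbitFrom G' T L) := by
  induction L generalizing S T with
  | nil => exact hST
  | cons H L ih => exact ih (nbhd_sdiff_pullback_subset f hST H)

lemma Wins.map_pullback (f : G →g G') {L : List (Finset W)} (h : Wins G' L) :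
    Wins G (L.map (pullback f)) := by
  have hsub := rabbitFrom_map_pullback_subset f (S := univ) (T := univ) (fun v _ => by simp) L
  rw [h] at hsub
  simpa [Wins] using hsub

theorem hunterNumber_le_mul_of_hom [DecidableEq W] (f : G →g G') {k : ℕ}
    (hk : ∀ w, (univ.filter fun v => f v = w).card ≤ k) :
    hunterNumber G ≤ k * hunterNumber G' := by
  obtain ⟨L, hwin, hcard⟩ := exists_wins_card_le_hunterNumber G'
  refine Nat.sInf_le ⟨L.map (pullback f), hwin.map_pullback f, ?_⟩
  rw [List.forall_mem_map]
  exact fun H hH => (card_pullback_le f hk H).trans (Nat.mul_le_mul_left k (hcard H hH))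

end Homomorphism

noncomputable def sweep (m t : ℕ) : List (Finset (Fin m)) :=
  (List.range t).map fun i => univ.filter fun v => (v : ℕ) = i

lemma card_le_one_of_mem_sweep {m t : ℕ} {s : Finset (Fin m)} (hs : s ∈ sweep m t) :
    s.card ≤ 1 := by
  obtain ⟨i, -, rfl⟩ := List.mem_map.mp hs
  exact card_le_one.mpr fun u hu v hv =>
    Fin.ext ((mem_filter.mp hu).2.trans (mem_filter.mp hv).2.symm)

/-- Rabbits whose position has the parity of the hunter's stay strictly ahead of the hunter until
they are shot. -/
lemma le_of_mem_rabbitFrom_sweep {m t : ℕ} (S : Finset (Fin m)) {v : Fin m}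
    (hv : v ∈ rabbitFrom (pathGraph m) S (sweep m t)) (heven : ((v : ℕ) + t) % 2 = 0) :
    t ≤ v := by
  induction t generalizing v with
  | zero => exact Nat.zero_le _
  | succ t ih =>
    rw [sweep, List.range_succ, List.map_append, List.map_singleton, rabbitFrom_concat] at hv
    simp only [nbhd, mem_filter, mem_univ, true_and, mem_sdiff] at hv
    obtain ⟨u, ⟨hu, hushot⟩, hadj⟩ := hv
    have := ih hu
    rw [pathGraph_adj] at hadj
    omega

lemma mod_two_of_mem_rabbitFrom_pathGraph {m k : ℕ} {S : Finset (Fin m)}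
    (hS : ∀ v ∈ S, ((v : ℕ) + k) % 2 = 0) {L : List (Finset (Fin m))} {v : Fin m}
    (hv : v ∈ rabbitFrom (pathGraph m) S L) : ((v : ℕ) + k + L.length) % 2 = 0 := by
  induction L generalizing S k with
  | nil => exact hS v hv
  | cons H L ih =>
    have hstep : ∀ w ∈ rabbitFrom (pathGraph m) S [H], ((w : ℕ) + (k + 1)) % 2 = 0 := by
      intro w hw
      simp only [rabbitFrom, List.foldl, nbhd, mem_filter, mem_univ, true_and, mem_sdiff] at hw
      obtain ⟨u, ⟨hu, -⟩, hadj⟩ := hw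
      have := hS u hu
      rw [pathGraph_adj] at hadj
      omega
    have := ih hstep hv
    rw [List.length_cons]
    omega

@[simps]
def pathGraph.revHom (m : ℕ) : pathGraph m →g pathGraph m where
  toFun := Fin.rev
  map_rel' := by
    intro u v h
    rw [pathGraph_adj] at h ⊢
    simp only [Fin.val_rev]
    omega

/-- Sweep the path from left to right, then from right to left: the first sweep catches every
rabbit of one parity class, the second, run on the reflected path, catches the other. -/
theorem wins_pathGraph (n : ℕ) :
    Wins (pathGraph (n + 1)) (sweep (n + 1) (n + 1) ++
      (sweep (n + 1) (n + 1)).map (pullback (pathGraph.revHom (n + 1)))) := by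
  set R := rabbitFrom (pathGraph (n + 1)) univ (sweep (n + 1) (n + 1))
  set T := R.image (pathGraph.revHom (n + 1))
  have hT : ∀ v ∈ T, (v : ℕ) % 2 = 0 := by
    intro v hv
    obtain ⟨u, hu, rfl⟩ := mem_image.mp hv
    have := mt (le_of_mem_rabbitFrom_sweep univ hu) (by omega)
    rw [pathGraph.revHom_apply, Fin.val_rev]
    omega
  have hT' : rabbitFrom (pathGraph (n + 1)) T (sweep (n + 1) (n + 1)) = ∅ := by
    refine eq_empty_of_forall_notMem fun v hv => ?_
    have heven := mod_two_of_mem_rabbitFrom_pathGraph (k := 0) hT hv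
    rw [sweep, List.length_map, List.length_range] at heven
    have := le_of_mem_rabbitFrom_sweep T hv (by omega)
    omega
  have hsub := rabbitFrom_map_pullback_subset (pathGraph.revHom (n + 1)) (T := T)
    (fun v hv => mem_pullback.mpr (mem_image_of_mem _ hv)) (sweep (n + 1) (n + 1))
  rw [hT'] at hsub
  rw [Wins, rabbitFrom_append]
  simpa using hsub

theorem hunterNumber_pathGraph_le_one (m : ℕ) : hunterNumber (pathGraph m) ≤ 1 := by
  cases m with
  | zero => exact Nat.sInf_le ⟨[], by simp [Wins, rabbitFrom], by simp⟩
  | succ n =>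
    refine Nat.sInf_le ⟨_, wins_pathGraph n, fun s hs => ?_⟩
    obtain hs | ⟨H, hH, rfl⟩ := List.mem_append.mp hs |>.imp_right List.mem_map.mp
    · exact card_le_one_of_mem_sweep hs
    · have hfiber : ∀ w : Fin (n + 1),
          (univ.filter fun v => pathGraph.revHom (n + 1) v = w).card ≤ 1 :=
        fun w => card_le_one.mpr fun u hu v hv => Fin.rev_injective
          ((mem_filter.mp hu).2.trans (mem_filter.mp hv).2.symm)
      simpa using (card_pullback_le _ hfiber H).trans_eq (one_mul _) |>.trans
        (card_le_one_of_mem_sweep hH)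

lemma Q_adj_card {n : ℕ} {x y : Finset (Fin n)} (h : (Q n).Adj x y) :
    x.card + 1 = y.card ∨ y.card + 1 = x.card := by
  have hxy : (x \ y).card + (y \ x).card = 1 := by
    rw [← card_union_of_disjoint disjoint_sdiff_sdiff, ← sup_eq_union, ← symmDiff_def]
    exact h
  have hx := card_sdiff_add_card_inter x y
  have hy := card_sdiff_add_card_inter y x
  rw [inter_comm] at hy
  omega

def Q.weightHom (n : ℕ) : Q n →g pathGraph (n + 1) where
  toFun x := ⟨x.card, Nat.lt_succ_of_le (card_le_univ x |>.trans_eq (Fintype.card_fin n))⟩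
  map_rel' h := pathGraph_adj.mpr (Q_adj_card h)

lemma card_fiber_weightHom_le (n : ℕ) (k : Fin (n + 1)) :
    (univ.filter fun x => Q.weightHom n x = k).card ≤ n.choose (n / 2) := by
  have hfiber :
      (univ.filter fun x => Q.weightHom n x = k) = powersetCard k (univ : Finset (Fin n)) := by
    ext x
    simp [Q.weightHom, Fin.ext_iff]
  rw [hfiber, card_powersetCard, card_univ, Fintype.card_fin]
  exact Nat.choose_le_middle k n

/-- $Hun(Q^n) ≤ \binom{n}{\lfloor n/2 \rfloor}$. -/
theorem hunterNumber_Q_le (n : ℕ) :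
    hunterNumber (Q n) ≤ Nat.choose n (n / 2) :=
  calc hunterNumber (Q n) ≤ n.choose (n / 2) * hunterNumber (pathGraph (n + 1)) :=
        hunterNumber_le_mul_of_hom (Q.weightHom n) (card_fiber_weightHom_le n)
    _ ≤ n.choose (n / 2) * 1 := Nat.mul_le_mul_left _ (hunterNumber_pathGraph_le_one _)
    _ = n.choose (n / 2) := mul_one _
end

section
/- If G has closed isoperimetric nesting, then the deaf-rabbit hunter number satisfies Hun[G] = 1 + max_k (mun[k] − k), where mun[k] = min{|N[W]| : W ⊆ V(G), |W| = k}. -/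
open Finset
open scoped Classical

variable {V : Type*} [Fintype V]

/-- Closed neighborhood of a set of vertices. -/
noncomputable def cnbhd (G : SimpleGraph V) (S : Finset V) : Finset V :=
  S ∪ nbhd G S

/-- Possible positions of a deaf rabbit (which may stay put) after the strategy `L`. -/
noncomputable def rabbitFromC (G : SimpleGraph V) (S : Finset V) (L : List (Finset V)) :
    Finset V :=
  L.foldl (fun R H => cnbhd G (R \ H)) S

/-- A winning strategy against a deaf rabbit. -/
def WinsC (G : SimpleGraph V) (L : List (Finset V)) : Prop :=
  rabbitFromC G Finset.univ L = ∅

/-- The deaf-rabbit hunter number $Hun[G]$. -/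
noncomputable def hunterNumberC (G : SimpleGraph V) : ℕ :=
  sInf {k | ∃ L : List (Finset V), WinsC G L ∧ ∀ s ∈ L, s.card ≤ k}

/-- $mun[k]$: minimum size of a union of $k$ closed neighborhoods. -/
noncomputable def munC (G : SimpleGraph V) (k : ℕ) : ℕ :=
  sInf {m | ∃ W : Finset V, W.card = k ∧ (cnbhd G W).card = m}

/-!
Lower bound: if some $k$ has $mun[k] \ge k + c$, a rabbit facing $c$ hunters keeps at least
$k + c$ possible positions, since after any $c$ shots at least $k$ positions survive and their
closed neighbourhood has at least $mun[k]$ vertices.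

Upper bound: with $b = 1 + \max_k (mun[k] - k)$ hunters and the rabbit confined to the chain set
$G_m$, shooting $G_m \setminus G_{m-b}$ confines it to $N[G_{m-b}] = G_{mun[m-b]}$, and
$mun[m-b] < m$; once $m \le b$ the hunters shoot all of $G_m$.
-/

variable (G : SimpleGraph V)

lemma subset_cnbhd (S : Finset V) : S ⊆ cnbhd G S :=
  subset_union_left

lemma nbhd_mono {S T : Finset V} (h : S ⊆ T) : nbhd G S ⊆ nbhd G T :=
  fun w => by
    simp only [nbhd, mem_filter, mem_univ, true_and]
    exact fun ⟨v, hv, hadj⟩ => ⟨v, h hv, hadj⟩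

lemma cnbhd_mono {S T : Finset V} (h : S ⊆ T) : cnbhd G S ⊆ cnbhd G T :=
  union_subset_union h (nbhd_mono G h)

@[simp]
lemma cnbhd_empty : cnbhd G ∅ = ∅ := by
  simp [cnbhd, nbhd]

lemma munC_le_card_cnbhd {k : ℕ} {S : Finset V} (hk : k ≤ #S) : munC G k ≤ #(cnbhd G S) := by
  obtain ⟨W, hWS, rfl⟩ := exists_subset_card_eq hk
  have hW : munC G #W ≤ #(cnbhd G W) := Nat.sInf_le ⟨W, rfl, rfl⟩
  exact hW.trans (card_le_card (cnbhd_mono G hWS))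

lemma exists_card_cnbhd_eq_munC {k : ℕ} (hk : k ≤ Fintype.card V) :
    ∃ W : Finset V, #W = k ∧ #(cnbhd G W) = munC G k := by
  obtain ⟨W, -, hW⟩ := exists_subset_card_eq (s := univ) (by simpa using hk)
  have hne : {m | ∃ W : Finset V, #W = k ∧ #(cnbhd G W) = m}.Nonempty := ⟨_, W, hW, rfl⟩
  exact Nat.sInf_mem hne

lemma le_munC {k : ℕ} (hk : k ≤ Fintype.card V) : k ≤ munC G k := by
  obtain ⟨W, rfl, hW⟩ := exists_card_cnbhd_eq_munC G hk
  exact hW ▸ card_le_card (subset_cnbhd G W)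

lemma munC_le_card {k : ℕ} (hk : k ≤ Fintype.card V) : munC G k ≤ Fintype.card V := by
  obtain ⟨W, -, hW⟩ := exists_card_cnbhd_eq_munC G hk
  exact hW ▸ card_le_univ _

lemma rabbitFromC_mono (L : List (Finset V)) {S T : Finset V} (h : S ⊆ T) :
    rabbitFromC G S L ⊆ rabbitFromC G T L := by
  induction L generalizing S T with
  | nil => exact h
  | cons H L ih => exact ih (cnbhd_mono G (sdiff_subset_sdiff h subset_rfl))

lemma le_card_rabbitFromC {c k : ℕ} (hk : k + c ≤ munC G k) {L : List (Finset V)}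
    (hL : ∀ s ∈ L, #s ≤ c) {R : Finset V} (hR : k + c ≤ #R) :
    k + c ≤ #(rabbitFromC G R L) := by
  induction L generalizing R with
  | nil => exact hR
  | cons H L ih =>
    have hH : #H ≤ c := hL H List.mem_cons_self
    have hsurvivors : k ≤ #(R \ H) := by
      have := le_card_sdiff H R
      omega
    exact ih (fun s hs => hL s (List.mem_cons_of_mem H hs))
      (hk.trans (munC_le_card_cnbhd G hsurvivors))

lemma monotoneOn_Icc_of_le_succ {α : Type*} [Preorder α] {f : ℕ → α} {a b : ℕ}
    (h : ∀ i, a ≤ i → i < b → f i ≤ f (i + 1)) : MonotoneOn f (Set.Icc a b) := by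
  rintro i ⟨hai, -⟩ j ⟨-, hjb⟩ hij
  induction j, hij using Nat.le_induction with
  | base => exact le_rfl
  | succ j hij ih => exact (ih (by omega)).trans (h j (by omega) (by omega))

def IsClearable (c : ℕ) (R : Finset V) : Prop :=
  ∃ L : List (Finset V), rabbitFromC G R L = ∅ ∧ ∀ s ∈ L, #s ≤ c

variable {G}

lemma IsClearable.pos [Nonempty V] {c : ℕ} (h : IsClearable G c univ) : 0 < c := by
  obtain ⟨L, hW, hL⟩ := h
  by_contra! hc
  obtain rfl : c = 0 := Nat.le_zero.mp hc
  have hV : 1 ≤ Fintype.card V := Fintype.card_pos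
  have := le_card_rabbitFromC G (le_munC G hV) hL (R := univ) (by simpa using hV)
  simp [hW] at this

lemma IsClearable.munC_sub_lt [Nonempty V] {c k : ℕ} (h : IsClearable G c univ)
    (hk : k ≤ Fintype.card V) : munC G k - k < c := by
  have hc := h.pos
  obtain ⟨L, hW, hL⟩ := h
  by_contra! h
  have hkc : k + c ≤ munC G k := by have := le_munC G hk; omega
  have hsurvive := le_card_rabbitFromC G hkc hL (R := univ)
    (by simpa using hkc.trans (munC_le_card G hk))
  rw [hW, card_empty] at hsurvive
  omega

lemma isClearable_of_card_le {c : ℕ} {R : Finset V} (h : #R ≤ c) : IsClearable G c R :=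
  ⟨[R], by simp [rabbitFromC], by simpa⟩

lemma IsClearable.of_subset {c : ℕ} {S T : Finset V} (h : IsClearable G c T) (hST : S ⊆ T) :
    IsClearable G c S :=
  let ⟨L, hL, hs⟩ := h
  ⟨L, subset_empty.mp (hL ▸ rabbitFromC_mono G L hST), hs⟩

lemma IsClearable.of_cnbhd_sdiff {c : ℕ} {R H : Finset V} (hH : #H ≤ c)
    (h : IsClearable G c (cnbhd G (R \ H))) : IsClearable G c R :=
  let ⟨L, hL, hs⟩ := h
  ⟨H :: L, hL, List.forall_mem_cons.mpr ⟨hH, hs⟩⟩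

lemma isClearable_of_closed_nesting {Gch : ℕ → Finset V} {b : ℕ}
    (hcard : ∀ i, 1 ≤ i → i ≤ Fintype.card V → #(Gch i) = i)
    (hmono : MonotoneOn Gch (Set.Icc 1 (Fintype.card V)))
    (hclosed : ∀ i, 1 ≤ i → i ≤ Fintype.card V → cnbhd G (Gch i) = Gch (munC G i))
    (hb : ∀ k, k ≤ Fintype.card V → munC G k < k + b) :
    ∀ m, 1 ≤ m → m ≤ Fintype.card V → IsClearable G b (Gch m) := by
  intro m
  induction m using Nat.strong_induction_on with
  | _ m ih =>
  intro hm hmn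
  by_cases hmb : m ≤ b
  · exact isClearable_of_card_le ((hcard m hm hmn).trans_le hmb)
  have hk : 1 ≤ m - b := by omega
  have hsub : Gch (m - b) ⊆ Gch m := hmono ⟨hk, by omega⟩ ⟨hm, hmn⟩ (by omega)
  refine IsClearable.of_cnbhd_sdiff (H := Gch m \ Gch (m - b)) ?_ ?_
  · rw [card_sdiff_of_subset hsub, hcard m hm hmn, hcard (m - b) hk (by omega)]
    omega
  have hmun : munC G (m - b) < m := by have := hb (m - b) (by omega); omega
  have hmun_pos : 1 ≤ munC G (m - b) := hk.trans (le_munC G (by omega))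
  refine (ih _ hmun hmun_pos (by omega)).of_subset ?_
  rw [← hclosed _ hk (by omega), sdiff_sdiff_self_left]
  exact cnbhd_mono G inter_subset_right

/-- If $G$ has closed isoperimetric nesting, then $Hun[G] = 1 + \max_k (mun[k]-k)$. -/
theorem hunterNumberC_of_closed_nesting {V : Type*} [Fintype V] [Nonempty V]
    (G : SimpleGraph V)
    (hnest : ∃ Gch : ℕ → Finset V,
      (∀ i, 1 ≤ i → i ≤ Fintype.card V → (Gch i).card = i) ∧
      (∀ i, 1 ≤ i → i < Fintype.card V → Gch i ⊆ Gch (i + 1)) ∧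
      (∀ i, 1 ≤ i → i ≤ Fintype.card V →
        (cnbhd G (Gch i)).card = munC G i ∧
          cnbhd G (Gch i) = Gch ((cnbhd G (Gch i)).card))) :
    hunterNumberC G = 1 + (Finset.range (Fintype.card V + 1)).sup fun k => munC G k - k := by
  obtain ⟨Gch, hcard, hsucc, hnb⟩ := hnest
  set M := (range (Fintype.card V + 1)).sup fun k => munC G k - k
  have hclear : IsClearable G (1 + M) univ := by
    have hclosed i h1 h2 : cnbhd G (Gch i) = Gch (munC G i) :=
      (hnb i h1 h2).2.trans (congrArg Gch (hnb i h1 h2).1)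
    have hb k (hk : k ≤ Fintype.card V) : munC G k < k + (1 + M) := by
      have : munC G k - k ≤ M := le_sup (f := fun k => munC G k - k) (mem_range.2 (by omega))
      omega
    have htop : Gch (Fintype.card V) = univ :=
      eq_univ_of_card _ (hcard _ Fintype.card_pos le_rfl)
    simpa [htop] using isClearable_of_closed_nesting hcard (monotoneOn_Icc_of_le_succ hsucc)
      hclosed hb _ Fintype.card_pos le_rfl
  refine le_antisymm (Nat.sInf_le hclear) (le_csInf ⟨_, hclear⟩ fun c hc => ?_)
  have hc : IsClearable G c univ := hc
  have : M < c := (Finset.sup_lt_iff hc.pos).2 fun k hk =>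
    hc.munC_sub_lt (Nat.lt_succ_iff.1 (mem_range.1 hk))
  omega
end
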